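/- Let $f:\mathbb{R}^n\to\mathbb{R}$ be a smooth function, $a\in\mathbb{R}^n$, and let $p$ be a point with $\operatorname{grad} f(p)\ne 0$, $p\ne a$, and $p-a$ parallel to $\operatorname{grad} f(p)$. Suppose further that $p$ is a non-degenerate critical point both of $f$ restricted to the sphere $S=\{x : \|x-a\|=\|p-a\|\}$ and of $r_a(x)=\|x-a\|$ restricted to $M=f^{-1}(f(p))$. If $\langle p-a, \operatorname{grad} f(p)\rangle > 0$ (i.e. $f$ increases in the outward radial direction at $p$), then $p$ is a local maximum of $f|_S$ if and only if $p$ is a local minimum of $r_a|_M$, and $p$ is a local minimum of $f|_S$ if and only if $p$ is a local maximum of $r_a|_M$. -/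

import Mathlib

open scoped RealInnerProductSpace

/-- `p` is a non-degenerate critical point of the restriction of `g` to the level set
`h⁻¹(h p)` (at a point where the level set is regular, criticality is the Lagrange
condition `∇g p = μ • ∇h p`, and non-degeneracy means that the bilinear form
`Hess(g - μ h)` restricted to the tangent space `(∇h p)^⊥` is non-degenerate). -/
def IsNondegenerateCritPtOn {n : ℕ} (h g : EuclideanSpace ℝ (Fin n) → ℝ)
    (p : EuclideanSpace ℝ (Fin n)) : Prop :=
  ∃ μ : ℝ, gradient g p = μ • gradient h p ∧
    ∀ w : EuclideanSpace ℝ (Fin n), w ≠ 0 → ⟪gradient h p, w⟫ = 0 →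
      ∃ w' : EuclideanSpace ℝ (Fin n), ⟪gradient h p, w'⟫ = 0 ∧
        iteratedFDeriv ℝ 2 (fun x => g x - μ * h x) p ![w, w'] ≠ 0

/-! Near `p` the radial derivative `x ↦ f' x (x - a)` is positive, so on a small ball around `p`
both `f` and `r_a = ‖· - a‖` are strictly increasing along every ray from `a`: they are
comonotone on pairs of points of the ball lying on a common ray. Every point near `p` can be moved
along its ray onto the sphere `S` (radial projection) and onto the fibre `M` (intermediate value
theorem) without leaving a prescribed neighbourhood of `p`. So if `x ∈ M` near `p` were closer to
`a` than `p` while `p` maximises `f` on `S`, the projection `y` of `x` onto `S` would give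
`f y > f x = f p`. The other three implications are the same argument with the roles of `f` and
`r_a`, or of maxima and minima, exchanged. -/

open Filter Topology Metric Set

section Comonotone

variable {X : Type*} [TopologicalSpace X] {g h : X → ℝ} {p : X} {R : X → X → Prop}

theorem IsLocalMaxOn.isLocalMinOn_of_comonotone (hR : ∀ x y, R x y → (g x < g y ↔ h x < h y))
    (hreach : ∀ U ∈ 𝓝 p, ∀ᶠ x in 𝓝 p, ∃ y ∈ U, R x y ∧ h y = h p)
    (hmax : IsLocalMaxOn g {x | h x = h p} p) : IsLocalMinOn h {x | g x = g p} p := by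
  obtain ⟨U, hU, hUmax⟩ := mem_nhdsWithin_iff_exists_mem_nhds_inter.mp hmax
  filter_upwards [nhdsWithin_le_nhds (hreach U hU), self_mem_nhdsWithin]
    with x ⟨y, hyU, hxy, hy⟩ (hx : g x = g p)
  by_contra! hlt
  have hgy : g y ≤ g p := hUmax ⟨hyU, hy⟩
  have hgxy : g x < g y := (hR x y hxy).mpr (hlt.trans_eq hy.symm)
  linarith

theorem IsLocalMinOn.isLocalMaxOn_of_comonotone (hRsymm : ∀ x y, R x y → R y x)
    (hR : ∀ x y, R x y → (g x < g y ↔ h x < h y))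
    (hreach : ∀ U ∈ 𝓝 p, ∀ᶠ x in 𝓝 p, ∃ y ∈ U, R x y ∧ h y = h p)
    (hmin : IsLocalMinOn g {x | h x = h p} p) : IsLocalMaxOn h {x | g x = g p} p := by
  have hneg := IsLocalMaxOn.isLocalMinOn_of_comonotone (g := fun x => -g x) (h := fun x => -h x)
    (fun x y hxy => by simpa only [neg_lt_neg_iff] using hR y x (hRsymm x y hxy))
    (by simpa only [neg_inj] using hreach) (by simpa only [neg_inj] using hmin.neg)
  simpa only [neg_inj, neg_neg] using hneg.neg

end Comonotone

variable {E : Type*} [NormedAddCommGroup E] [NormedSpace ℝ E] {f : E → ℝ} {a p : E} {B : Set E}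

theorem Convex.preimage_ray (hB : Convex ℝ B) (a v : E) : Convex ℝ {t : ℝ | a + t • v ∈ B} :=
  (hB.translate_preimage_right a).is_linear_preimage (IsLinearMap.isLinearMap_smul' v)

theorem strictMonoOn_ray_of_fderiv_pos (hf : Differentiable ℝ f) (hB : Convex ℝ B)
    (hpos : ∀ z ∈ B, 0 < fderiv ℝ f z (z - a)) (v : E) :
    StrictMonoOn (fun t : ℝ => f (a + t • v)) {t | 0 < t ∧ a + t • v ∈ B} := by
  have hderiv (t : ℝ) : HasDerivAt (fun t : ℝ => f (a + t • v)) (fderiv ℝ f (a + t • v) v) t := by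
    have hray : HasDerivAt (fun t : ℝ => a + t • v) v t := by
      simpa using ((hasDerivAt_id t).smul_const v).const_add a
    exact (hf _).hasFDerivAt.comp_hasDerivAt t hray
  refine strictMonoOn_of_deriv_pos ((convex_Ioi 0).inter (hB.preimage_ray a v))
    (fun t _ => (hderiv t).continuousAt.continuousWithinAt) fun t ht => ?_
  obtain ⟨htpos, htB⟩ := interior_subset ht
  have hradial := hpos _ htB
  rw [add_sub_cancel_left, map_smul, smul_eq_mul] at hradial
  rw [(hderiv t).deriv]
  exact pos_of_mul_pos_right hradial htpos.le

theorem lt_iff_norm_sub_lt_of_sameRay (hf : Differentiable ℝ f) (hB : Convex ℝ B)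
    (hpos : ∀ z ∈ B, 0 < fderiv ℝ f z (z - a)) {x y : E} (hx : x ∈ B) (hy : y ∈ B)
    (hxy : SameRay ℝ (x - a) (y - a)) : f x < f y ↔ ‖x - a‖ < ‖y - a‖ := by
  have hne : ∀ z ∈ B, z - a ≠ 0 := fun z hz h0 => by simpa [h0] using hpos z hz
  obtain ⟨t, ht, hyx⟩ := hxy.exists_pos_left (hne x hx) (hne y hy)
  have h1 : (1 : ℝ) ∈ {t | 0 < t ∧ a + t • (x - a) ∈ B} := ⟨one_pos, by simpa using hx⟩
  have ht' : t ∈ {t | 0 < t ∧ a + t • (x - a) ∈ B} := ⟨ht, by simpa [hyx] using hy⟩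
  have hcmp := (strictMonoOn_ray_of_fderiv_pos hf hB hpos (x - a)).lt_iff_lt h1 ht'
  simp only [one_smul, add_sub_cancel, hyx] at hcmp
  rw [hcmp, ← hyx, norm_smul, Real.norm_of_nonneg ht.le,
    lt_mul_iff_one_lt_left (norm_pos_iff.mpr (hne x hx))]

theorem eventually_fderiv_apply_sub_pos (hf : ContDiff ℝ 1 f)
    (hsign : 0 < fderiv ℝ f p (p - a)) : ∀ᶠ z in 𝓝 p, 0 < fderiv ℝ f z (z - a) :=
  continuousAt_const.eventually_lt
    ((hf.continuous_fderiv one_ne_zero).clm_apply (continuous_id.sub continuous_const)).continuousAt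
    hsign

theorem eventually_exists_sameRay_mem_sphere (hpa : p ≠ a) (hB : B ∈ 𝓝 p) {U : Set E}
    (hU : U ∈ 𝓝 p) :
    ∀ᶠ x in 𝓝 p, ∃ y ∈ U, (x ∈ B ∧ y ∈ B ∧ SameRay ℝ (x - a) (y - a)) ∧ ‖y - a‖ = ‖p - a‖ := by
  have hpa' : ‖p - a‖ ≠ 0 := norm_ne_zero_iff.mpr (sub_ne_zero.mpr hpa)
  let proj : E → E := fun x => a + (‖p - a‖ / ‖x - a‖) • (x - a)
  have hproj : Tendsto proj (𝓝 p) (𝓝 p) := by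
    have : ContinuousAt proj p := by fun_prop (disch := exact hpa')
    simpa [proj, div_self hpa'] using this.tendsto
  filter_upwards [hB, hproj (inter_mem hU hB), eventually_ne_nhds hpa]
    with x hxB ⟨hyU, hyB⟩ hxa
  refine ⟨proj x, hyU, ⟨hxB, hyB, ?_⟩, ?_⟩
  · simpa [proj] using SameRay.sameRay_nonneg_smul_right (R := ℝ) (x - a)
      (div_nonneg (norm_nonneg (p - a)) (norm_nonneg (x - a)))
  · simp [proj, norm_smul, sub_ne_zero.mpr hxa]

theorem eventually_exists_sameRay_mem_fiber (hf : Differentiable ℝ f) (hBp : B ∈ 𝓝 p)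
    (hpos : ∀ z ∈ B, 0 < fderiv ℝ f z (z - a)) {U : Set E} (hU : U ∈ 𝓝 p) :
    ∀ᶠ x in 𝓝 p, ∃ y ∈ U, (x ∈ B ∧ y ∈ B ∧ SameRay ℝ (x - a) (y - a)) ∧ f y = f p := by
  obtain ⟨δ, hδ, hV⟩ := Metric.mem_nhds_iff.mp (inter_mem hU hBp)
  have hray (c : ℝ) : Continuous fun x : E => a + c • (x - a) := by fun_prop
  have hnear : ∀ᶠ c in 𝓝 (1 : ℝ), 0 < c ∧ a + c • (p - a) ∈ ball p δ := by
    refine (lt_mem_nhds one_pos).and ?_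
    have : ContinuousAt (fun c : ℝ => a + c • (p - a)) 1 := by fun_prop
    exact this.preimage_mem_nhds (by simpa using ball_mem_nhds p hδ)
  obtain ⟨c₁, ⟨hc₁, hc₁V⟩, hc₁1⟩ := (hnear.filter_mono nhdsWithin_le_nhds).and
    (self_mem_nhdsWithin (s := Iio 1)) |>.exists
  obtain ⟨c₂, ⟨hc₂, hc₂V⟩, hc₂1⟩ := (hnear.filter_mono nhdsWithin_le_nhds).and
    (self_mem_nhdsWithin (s := Ioi 1)) |>.exists
  have hmono := strictMonoOn_ray_of_fderiv_pos hf (convex_ball p δ)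
    (fun z hz => hpos z (hV hz).2) (p - a)
  have hp1 : (1 : ℝ) ∈ {t | 0 < t ∧ a + t • (p - a) ∈ ball p δ} :=
    ⟨one_pos, by rw [one_smul, add_sub_cancel]; exact mem_ball_self hδ⟩
  have hlow : f (a + c₁ • (p - a)) < f p := by
    simpa using hmono ⟨hc₁, hc₁V⟩ hp1 hc₁1
  have hup : f p < f (a + c₂ • (p - a)) := by
    simpa using hmono hp1 ⟨hc₂, hc₂V⟩ hc₂1
  filter_upwards [hBp, (hray c₁).continuousAt.preimage_mem_nhds (isOpen_ball.mem_nhds hc₁V),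
    (hray c₂).continuousAt.preimage_mem_nhds (isOpen_ball.mem_nhds hc₂V),
    (hf.continuous.comp (hray c₁)).continuousAt.eventually_lt continuousAt_const hlow,
    continuousAt_const.eventually_lt (hf.continuous.comp (hray c₂)).continuousAt hup]
    with x hxB hx₁ hx₂ hfx₁ hfx₂
  obtain ⟨t, ht, hft⟩ := intermediate_value_Icc (hc₁1.trans hc₂1).le
    (hf.continuous.comp (by fun_prop : Continuous fun t : ℝ => a + t • (x - a))).continuousOn
    ⟨hfx₁.le, hfx₂.le⟩
  have htV : a + t • (x - a) ∈ ball p δ :=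
    ((convex_ball p δ).preimage_ray a (x - a)).ordConnected.out hx₁ hx₂ ht
  have hray_xy : SameRay ℝ (x - a) (a + t • (x - a) - a) := by
    simpa using SameRay.sameRay_nonneg_smul_right (R := ℝ) (x - a) (hc₁.trans_le ht.1).le
  exact ⟨_, (hV htV).1, ⟨hxB, (hV htV).2, hray_xy⟩, hft⟩

theorem isLocalMaxOn_sphere_iff_isLocalMinOn_norm_sub_fiber (hf : ContDiff ℝ 1 f)
    (hsign : 0 < fderiv ℝ f p (p - a)) :
    (IsLocalMaxOn f (sphere a ‖p - a‖) p ↔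
        IsLocalMinOn (fun x => ‖x - a‖) (f ⁻¹' {f p}) p) ∧
    (IsLocalMinOn f (sphere a ‖p - a‖) p ↔
        IsLocalMaxOn (fun x => ‖x - a‖) (f ⁻¹' {f p}) p) := by
  have hpa : p ≠ a := by rintro rfl; simp at hsign
  have hdiff : Differentiable ℝ f := hf.differentiable one_ne_zero
  obtain ⟨ε, hε, hpos⟩ := eventually_nhds_iff_ball.mp (eventually_fderiv_apply_sub_pos hf hsign)
  let R : E → E → Prop := fun x y => x ∈ ball p ε ∧ y ∈ ball p ε ∧ SameRay ℝ (x - a) (y - a)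
  have hRsymm : ∀ x y, R x y → R y x := fun x y ⟨hx, hy, hxy⟩ => ⟨hy, hx, hxy.symm⟩
  have hR : ∀ x y, R x y → (f x < f y ↔ ‖x - a‖ < ‖y - a‖) := fun x y ⟨hx, hy, hxy⟩ =>
    lt_iff_norm_sub_lt_of_sameRay hdiff (convex_ball p ε) hpos hx hy hxy
  have hR' : ∀ x y, R x y → (‖x - a‖ < ‖y - a‖ ↔ f x < f y) := fun x y hxy => (hR x y hxy).symm
  have hS : ∀ U ∈ 𝓝 p, ∀ᶠ x in 𝓝 p, ∃ y ∈ U, R x y ∧ ‖y - a‖ = ‖p - a‖ := fun U hU =>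
    eventually_exists_sameRay_mem_sphere hpa (ball_mem_nhds p hε) hU
  have hM : ∀ U ∈ 𝓝 p, ∀ᶠ x in 𝓝 p, ∃ y ∈ U, R x y ∧ f y = f p := fun U hU =>
    eventually_exists_sameRay_mem_fiber hdiff (ball_mem_nhds p hε) hpos hU
  have hsphere : sphere a ‖p - a‖ = {x | ‖x - a‖ = ‖p - a‖} := by ext; simp
  rw [hsphere]
  exact ⟨⟨fun h => h.isLocalMinOn_of_comonotone hR hS,
      fun h => h.isLocalMaxOn_of_comonotone hRsymm hR' hM⟩,
    ⟨fun h => h.isLocalMaxOn_of_comonotone hRsymm hR hS,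
      fun h => h.isLocalMinOn_of_comonotone hR' hM⟩⟩

theorem stmt19_general {n : ℕ} (f : EuclideanSpace ℝ (Fin n) → ℝ) (hf : ContDiff ℝ (⊤ : ℕ∞) f)
    (a p : EuclideanSpace ℝ (Fin n))
    (hsign : 0 < ⟪p - a, gradient f p⟫) :
    (IsLocalMaxOn f (Metric.sphere a ‖p - a‖) p ↔
        IsLocalMinOn (fun x => ‖x - a‖) (f ⁻¹' {f p}) p) ∧
    (IsLocalMinOn f (Metric.sphere a ‖p - a‖) p ↔
        IsLocalMaxOn (fun x => ‖x - a‖) (f ⁻¹' {f p}) p) := by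
  have hsign' : 0 < fderiv ℝ f p (p - a) := by
    rwa [real_inner_comm, gradient, InnerProductSpace.toDual_symm_apply] at hsign
  exact isLocalMaxOn_sphere_iff_isLocalMinOn_norm_sub_fiber (hf.of_le (by simp)) hsign'

/-- Remark 2.5(2) of the paper, precise version: let `f : ℝⁿ → ℝ` be
smooth, `p ≠ a`, `grad f (p) ≠ 0`, and `p - a` parallel to `grad f (p)`.  Assume `p` is a
non-degenerate critical point both of `f` restricted to the sphere
`S = {x : ‖x - a‖ = ‖p - a‖}` (the level set of `x ↦ ‖x - a‖²`) and of
`r_a(x) = ‖x - a‖` restricted to `M = f⁻¹(f p)`.  If `⟪p - a, grad f p⟫ > 0` then `p` is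
a local maximum of `f|_S` iff it is a local minimum of `r_a|_M`, and `p` is a local
minimum of `f|_S` iff it is a local maximum of `r_a|_M`. -/
theorem stmt19 {n : ℕ} (f : EuclideanSpace ℝ (Fin n) → ℝ) (hf : ContDiff ℝ (⊤ : ℕ∞) f)
    (a p : EuclideanSpace ℝ (Fin n)) (hpa : p ≠ a) (hgrad : gradient f p ≠ 0)
    (hpar : ¬ LinearIndependent ℝ ![p - a, gradient f p])
    (hndS : IsNondegenerateCritPtOn (fun x => ‖x - a‖ ^ 2) f p)
    (hndM : IsNondegenerateCritPtOn f (fun x => ‖x - a‖ ^ 2) p)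
    (hsign : 0 < ⟪p - a, gradient f p⟫) :
    (IsLocalMaxOn f (Metric.sphere a ‖p - a‖) p ↔
        IsLocalMinOn (fun x => ‖x - a‖) (f ⁻¹' {f p}) p) ∧
    (IsLocalMinOn f (Metric.sphere a ‖p - a‖) p ↔
        IsLocalMaxOn (fun x => ‖x - a‖) (f ⁻¹' {f p}) p) :=
  stmt19_general f hf a p hsign
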